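/- Let c : ℤ → ℂ be a complex sequence, θ₀ ∈ [0, π/2), and suppose: (4) for every n ≥ 1, both c_n + c_{−n} and c_n − c_{−n} lie in K(θ₀); and (2*) there exist a natural number N₀ and a constant M > 0 such that for every m ≥ 1, ∑_{n=m}^{2m} |c_n − c_{n+1}| ≤ M · max_{m ≤ n < m+N₀} |c_n|. If the symmetric partial sums S_n(f,x) = ∑_{k=−n}^{n} c_k e^{ikx} converge uniformly on ℝ to a function f (i.e., lim_{n→∞} ‖f − S_n(f)‖ = 0), then lim_{n→∞} n·c_n = 0. -/

import Mathlib

open Filter Finset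

lemma sector_re {θ₀ : ℝ} (hθ₁ : θ₀ < Real.pi / 2) {z : ℂ} (hz : |z.arg| ≤ θ₀) :
    Real.cos θ₀ * ‖z‖ ≤ z.re := by
  have h1 : Real.cos θ₀ ≤ Real.cos z.arg := by
    rw [← Real.cos_abs z.arg]
    exact Real.cos_le_cos_of_nonneg_of_le_pi (abs_nonneg _)
      (by linarith [Real.pi_pos]) hz
  calc Real.cos θ₀ * ‖z‖ ≤ Real.cos z.arg * ‖z‖ := by
        apply mul_le_mul_of_nonneg_right h1 (norm_nonneg _)
    _ = z.re := by rw [mul_comm]; exact Complex.norm_mul_cos_arg z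

lemma sector_sum {θ₀ : ℝ} (hθ₁ : θ₀ < Real.pi / 2) (s : Finset ℕ) (w : ℕ → ℝ) (z : ℕ → ℂ)
    (hw : ∀ k ∈ s, 0 ≤ w k) (hz : ∀ k ∈ s, |(z k).arg| ≤ θ₀) :
    Real.cos θ₀ * ∑ k ∈ s, w k * ‖z k‖ ≤
      ‖∑ k ∈ s, (w k : ℂ) * z k‖ := by
  have h1 : Real.cos θ₀ * ∑ k ∈ s, w k * ‖z k‖ ≤ (∑ k ∈ s, (w k : ℂ) * z k).re := by
    rw [Complex.re_sum, Finset.mul_sum]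
    apply Finset.sum_le_sum
    intro k hk
    rw [Complex.re_ofReal_mul]
    calc Real.cos θ₀ * (w k * ‖z k‖) = w k * (Real.cos θ₀ * ‖z k‖) := by ring
      _ ≤ w k * (z k).re := mul_le_mul_of_nonneg_left (sector_re hθ₁ (hz k hk)) (hw k hk)
  exact h1.trans (Complex.re_le_norm _)

lemma split_sym (g : ℤ → ℂ) (n : ℕ) (hn : 1 ≤ n) :
    ∑ k ∈ Finset.Icc (-(2*n : ℤ)) (2*n : ℤ), g k =
      ∑ k ∈ Finset.Icc (-((n-1 : ℕ) : ℤ)) ((n-1 : ℕ) : ℤ), g k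
        + ∑ k ∈ Finset.Icc n (2*n), (g k + g (-(k : ℤ))) := by
  have hcast : ((n-1 : ℕ) : ℤ) = (n : ℤ) - 1 := by omega
  rw [hcast, Finset.sum_add_distrib]
  have h1 : ∑ k ∈ Finset.Icc n (2*n), g (k : ℤ) = ∑ k ∈ Finset.Icc (n : ℤ) (2*n : ℤ), g k := by
    apply Finset.sum_nbij' (fun k : ℕ => (k : ℤ)) (fun k : ℤ => k.toNat) <;>
      (intros a ha; simp only [Finset.mem_Icc] at *) <;> omega
  have h2 : ∑ k ∈ Finset.Icc n (2*n), g (-(k : ℤ)) = ∑ k ∈ Finset.Icc (-(2*n) : ℤ) (-(n : ℤ)), g k := by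
    apply Finset.sum_nbij' (fun k : ℕ => (-(k:ℤ))) (fun k : ℤ => (-k).toNat) <;>
      (intros a ha; simp only [Finset.mem_Icc] at *) <;> omega
  rw [h1, h2]
  have hu : Finset.Icc (-(2*n : ℤ)) (2*n : ℤ) =
      (Finset.Icc (-(2*n) : ℤ) (-(n:ℤ)) ∪ Finset.Icc (-(n:ℤ)+1) ((n:ℤ)-1)) ∪ Finset.Icc (n:ℤ) (2*n : ℤ) := by
    ext k; simp only [Finset.mem_union, Finset.mem_Icc]; omega
  have he : Finset.Icc (-(n:ℤ)+1) ((n:ℤ)-1) = Finset.Icc (-((n:ℤ)-1)) ((n:ℤ)-1) := by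
    ext k; simp only [Finset.mem_Icc]; omega
  rw [hu, Finset.sum_union, Finset.sum_union, he]
  · ring
  · rw [Finset.disjoint_left]; intro a; simp only [Finset.mem_Icc]; omega
  · rw [Finset.disjoint_left]; intro a; simp only [Finset.mem_union, Finset.mem_Icc]; omega

set_option maxHeartbeats 1000000 in
lemma stepA (c : ℤ → ℂ) (θ₀ : ℝ) (hθ₀ : 0 ≤ θ₀) (hθ₁ : θ₀ < Real.pi / 2)
    (h4 : ∀ n : ℤ, 1 ≤ n →
      |(c n + c (-n)).arg| ≤ θ₀ ∧ |(c n - c (-n)).arg| ≤ θ₀)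
    (f : ℝ → ℂ)
    (hconv : TendstoUniformly
      (fun (n : ℕ) (x : ℝ) =>
        ∑ k ∈ Finset.Icc (-(n : ℤ)) (n : ℤ), c k * Complex.exp ((k : ℂ) * (x : ℂ) * Complex.I))
      f atTop) :
    ∀ ε > 0, ∃ N : ℕ, ∀ n ≥ N, ∑ k ∈ Finset.Icc n (2*n), ‖c (k:ℤ)‖ ≤ ε := by
  have hcθ : 0 < Real.cos θ₀ := Real.cos_pos_of_mem_Ioo ⟨by linarith [Real.pi_pos], hθ₁⟩
  have hcθ1 : Real.cos θ₀ ≤ 1 := Real.cos_le_one θ₀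
  set cθ := Real.cos θ₀ with hcθdef
  intro ε hε
  have hδ : 0 < ε * cθ^2 / 3 := by positivity
  set δ := ε * cθ^2 / 3 with hδdef
  obtain ⟨N, hN⟩ := eventually_atTop.1 ((Metric.tendstoUniformly_iff.1 hconv) (δ/2) (by positivity))
  refine ⟨N + 1, ?_⟩
  intro n hn
  have hn1 : 1 ≤ n := by omega
  -- the block bound
  have hB : ∀ x : ℝ, ‖∑ k ∈ Finset.Icc n (2*n),
      (c (k:ℤ) * Complex.exp (((k:ℤ):ℂ) * (x:ℂ) * Complex.I)
        + c (-(k:ℤ)) * Complex.exp ((((-(k:ℤ) : ℤ)):ℂ) * (x:ℂ) * Complex.I))‖ < δ := by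
    intro x
    have e1 := split_sym (fun k : ℤ => c k * Complex.exp ((k:ℂ) * (x:ℂ) * Complex.I)) n hn1
    have c1 : ((2*n : ℕ) : ℤ) = (2*n : ℤ) := by push_cast; ring
    have hb1 := hN (2*n) (by omega) x
    have hb2 := hN (n-1) (by omega) x
    simp only [c1] at hb1
    have key : (∑ k ∈ Finset.Icc n (2*n),
        (c (k:ℤ) * Complex.exp (((k:ℤ):ℂ) * (x:ℂ) * Complex.I)
          + c (-(k:ℤ)) * Complex.exp ((((-(k:ℤ) : ℤ)):ℂ) * (x:ℂ) * Complex.I)))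
        = (∑ k ∈ Finset.Icc (-(2*n : ℤ)) (2*n : ℤ), c k * Complex.exp ((k:ℂ) * (x:ℂ) * Complex.I))
          - (∑ k ∈ Finset.Icc (-((n-1 : ℕ) : ℤ)) ((n-1 : ℕ) : ℤ), c k * Complex.exp ((k:ℂ) * (x:ℂ) * Complex.I)) := by
      rw [e1]; ring
    rw [key]
    have hsub : (∑ k ∈ Finset.Icc (-(2*n : ℤ)) (2*n : ℤ), c k * Complex.exp ((k:ℂ) * (x:ℂ) * Complex.I))
        - (∑ k ∈ Finset.Icc (-((n-1 : ℕ) : ℤ)) ((n-1 : ℕ) : ℤ), c k * Complex.exp ((k:ℂ) * (x:ℂ) * Complex.I))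
        = (f x - ∑ k ∈ Finset.Icc (-((n-1 : ℕ) : ℤ)) ((n-1 : ℕ) : ℤ), c k * Complex.exp ((k:ℂ) * (x:ℂ) * Complex.I))
          - (f x - ∑ k ∈ Finset.Icc (-(2*n : ℤ)) (2*n : ℤ), c k * Complex.exp ((k:ℂ) * (x:ℂ) * Complex.I)) := by
      ring
    rw [hsub]
    calc ‖_‖
        ≤ ‖f x - ∑ k ∈ Finset.Icc (-((n-1 : ℕ) : ℤ)) ((n-1 : ℕ) : ℤ), c k * Complex.exp ((k:ℂ) * (x:ℂ) * Complex.I)‖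
          + ‖f x - ∑ k ∈ Finset.Icc (-(2*n : ℤ)) (2*n : ℤ), c k * Complex.exp ((k:ℂ) * (x:ℂ) * Complex.I)‖ :=
          norm_sub_le _ _
      _ < δ/2 + δ/2 := by
          rw [← Complex.dist_eq, ← Complex.dist_eq]
          exact add_lt_add hb2 hb1
      _ = δ := by ring
  -- trig rewriting of each block term
  have hterm : ∀ (k : ℕ) (x : ℝ),
      c (k:ℤ) * Complex.exp (((k:ℤ):ℂ) * (x:ℂ) * Complex.I)
        + c (-(k:ℤ)) * Complex.exp ((((-(k:ℤ) : ℤ)):ℂ) * (x:ℂ) * Complex.I)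
      = (c (k:ℤ) + c (-(k:ℤ))) * Complex.cos (((k*x : ℝ)):ℂ)
        + ((c (k:ℤ) - c (-(k:ℤ))) * Complex.sin (((k*x : ℝ)):ℂ)) * Complex.I := by
    intro k x
    have h1 : (((k:ℤ):ℂ) * (x:ℂ) * Complex.I) = (((k*x : ℝ)):ℂ) * Complex.I := by push_cast; ring
    have h2 : ((((-(k:ℤ) : ℤ)):ℂ) * (x:ℂ) * Complex.I) = (-(((k*x : ℝ)):ℂ)) * Complex.I := by push_cast; ring
    rw [h1, h2, Complex.exp_mul_I, Complex.exp_mul_I, Complex.cos_neg, Complex.sin_neg]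
    ring
  have hu_arg : ∀ k ∈ Finset.Icc n (2*n), |(c (k:ℤ) + c (-(k:ℤ))).arg| ≤ θ₀ := by
    intro k hk
    simp only [Finset.mem_Icc] at hk
    exact (h4 (k:ℤ) (by exact_mod_cast le_trans hn1 hk.1)).1
  have hv_arg : ∀ k ∈ Finset.Icc n (2*n), |(c (k:ℤ) - c (-(k:ℤ))).arg| ≤ θ₀ := by
    intro k hk
    simp only [Finset.mem_Icc] at hk
    exact (h4 (k:ℤ) (by exact_mod_cast le_trans hn1 hk.1)).2
  -- x = 0
  have hB0 : ‖∑ k ∈ Finset.Icc n (2*n), (c (k:ℤ) + c (-(k:ℤ)))‖ < δ := by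
    have h := hB 0
    have e : (∑ k ∈ Finset.Icc n (2*n),
        (c (k:ℤ) * Complex.exp (((k:ℤ):ℂ) * ((0:ℝ):ℂ) * Complex.I)
          + c (-(k:ℤ)) * Complex.exp ((((-(k:ℤ) : ℤ)):ℂ) * ((0:ℝ):ℂ) * Complex.I)))
        = ∑ k ∈ Finset.Icc n (2*n), (c (k:ℤ) + c (-(k:ℤ))) := by
      apply Finset.sum_congr rfl
      intro k hk
      rw [hterm k 0]
      simp
    rw [e] at h
    exact h
  have hU : cθ * ∑ k ∈ Finset.Icc n (2*n), ‖c (k:ℤ) + c (-(k:ℤ))‖ ≤ δ := by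
    have h := sector_sum hθ₁ (Finset.Icc n (2*n)) (fun _ => 1)
      (fun k => c (k:ℤ) + c (-(k:ℤ))) (fun k _ => zero_le_one) hu_arg
    simp only [one_mul, Complex.ofReal_one] at h
    exact h.trans hB0.le
  -- x = x₀
  set x₀ := Real.pi / (4*n) with hx₀def
  have hx₀pos : 0 < x₀ := by
    apply div_pos Real.pi_pos; positivity
  have hw_half : ∀ k ∈ Finset.Icc n (2*n), 1/2 ≤ Real.sin (k * x₀) := by
    intro k hk
    simp only [Finset.mem_Icc] at hk
    have hkn : (n:ℝ) ≤ k := by exact_mod_cast hk.1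
    have hk2n : (k:ℝ) ≤ 2*n := by exact_mod_cast hk.2
    have hnR : (1:ℝ) ≤ n := by exact_mod_cast hn1
    have hx : x₀ * (4*n) = Real.pi := by
      rw [hx₀def]; field_simp
    have hπ := Real.pi_pos
    have h1 : Real.pi/4 ≤ (k:ℝ) * x₀ := by nlinarith
    have h2 : (k:ℝ) * x₀ ≤ Real.pi/2 := by nlinarith
    have h3 := Real.mul_le_sin (by nlinarith : (0:ℝ) ≤ (k:ℝ) * x₀) h2
    have e : 2/Real.pi * (Real.pi/4) = 1/2 := by
      field_simp
      norm_num
    have h4' : 1/2 ≤ 2/Real.pi * ((k:ℝ)*x₀) := by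
      rw [← e]
      apply mul_le_mul_of_nonneg_left h1 (by positivity)
    linarith
  have hBx : ‖(∑ k ∈ Finset.Icc n (2*n), (c (k:ℤ) + c (-(k:ℤ))) * Complex.cos (((k*x₀ : ℝ)):ℂ))
      + (∑ k ∈ Finset.Icc n (2*n), ((Real.sin (k*x₀) : ℝ):ℂ) * (c (k:ℤ) - c (-(k:ℤ)))) * Complex.I‖ < δ := by
    have h := hB x₀
    have e : (∑ k ∈ Finset.Icc n (2*n),
        (c (k:ℤ) * Complex.exp (((k:ℤ):ℂ) * (x₀:ℂ) * Complex.I)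
          + c (-(k:ℤ)) * Complex.exp ((((-(k:ℤ) : ℤ)):ℂ) * (x₀:ℂ) * Complex.I)))
        = (∑ k ∈ Finset.Icc n (2*n), (c (k:ℤ) + c (-(k:ℤ))) * Complex.cos (((k*x₀ : ℝ)):ℂ))
          + (∑ k ∈ Finset.Icc n (2*n), ((Real.sin (k*x₀) : ℝ):ℂ) * (c (k:ℤ) - c (-(k:ℤ)))) * Complex.I := by
      rw [Finset.sum_mul, ← Finset.sum_add_distrib]
      apply Finset.sum_congr rfl
      intro k hk
      rw [hterm k x₀, Complex.ofReal_sin]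
      ring
    rw [e] at h
    exact h
  have hVW : ‖∑ k ∈ Finset.Icc n (2*n), ((Real.sin (k*x₀) : ℝ):ℂ) * (c (k:ℤ) - c (-(k:ℤ)))‖
      ≤ δ + δ / cθ := by
    set X := ∑ k ∈ Finset.Icc n (2*n), (c (k:ℤ) + c (-(k:ℤ))) * Complex.cos (((k*x₀ : ℝ)):ℂ) with hX
    set Y := ∑ k ∈ Finset.Icc n (2*n), ((Real.sin (k*x₀) : ℝ):ℂ) * (c (k:ℤ) - c (-(k:ℤ))) with hY
    have habs : ‖Y‖ ≤ ‖X + Y * Complex.I‖ + ‖X‖ := by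
      have h1 : ‖Y‖ = ‖(X + Y * Complex.I) - X‖ := by
        rw [show (X + Y * Complex.I) - X = Y * Complex.I by ring, norm_mul, Complex.norm_I, mul_one]
      rw [h1]
      exact norm_sub_le _ _
    have hcos : ‖X‖ ≤ ∑ k ∈ Finset.Icc n (2*n), ‖c (k:ℤ) + c (-(k:ℤ))‖ := by
      calc ‖X‖ ≤ ∑ k ∈ Finset.Icc n (2*n), ‖(c (k:ℤ) + c (-(k:ℤ))) * Complex.cos (((k*x₀ : ℝ)):ℂ)‖ :=
            norm_sum_le _ _
        _ ≤ ∑ k ∈ Finset.Icc n (2*n), ‖c (k:ℤ) + c (-(k:ℤ))‖ := by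
            apply Finset.sum_le_sum
            intro k hk
            rw [norm_mul]
            nth_rewrite 2 [← mul_one (‖c (k:ℤ) + c (-(k:ℤ))‖)]
            apply mul_le_mul_of_nonneg_left _ (norm_nonneg _)
            rw [← Complex.ofReal_cos, Complex.norm_real, Real.norm_eq_abs]
            exact Real.abs_cos_le_one _
    have hsum_u : ∑ k ∈ Finset.Icc n (2*n), ‖c (k:ℤ) + c (-(k:ℤ))‖ ≤ δ / cθ := by
      rw [le_div_iff₀ hcθ]
      linarith [hU]
    linarith [habs, hBx.le, hcos, hsum_u]
  have hV : cθ * ((1/2) * ∑ k ∈ Finset.Icc n (2*n), ‖c (k:ℤ) - c (-(k:ℤ))‖) ≤ δ + δ / cθ := by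
    have hs := sector_sum hθ₁ (Finset.Icc n (2*n)) (fun k => Real.sin (k*x₀))
      (fun k => c (k:ℤ) - c (-(k:ℤ)))
      (fun k hk => le_trans (by norm_num) (hw_half k hk)) hv_arg
    have hhalf : (1/2) * ∑ k ∈ Finset.Icc n (2*n), ‖c (k:ℤ) - c (-(k:ℤ))‖
        ≤ ∑ k ∈ Finset.Icc n (2*n), Real.sin (k*x₀) * ‖c (k:ℤ) - c (-(k:ℤ))‖ := by
      rw [Finset.mul_sum]
      apply Finset.sum_le_sum
      intro k hk
      exact mul_le_mul_of_nonneg_right (hw_half k hk) (norm_nonneg _)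
    calc cθ * ((1/2) * ∑ k ∈ Finset.Icc n (2*n), ‖c (k:ℤ) - c (-(k:ℤ))‖)
        ≤ cθ * ∑ k ∈ Finset.Icc n (2*n), Real.sin (k*x₀) * ‖c (k:ℤ) - c (-(k:ℤ))‖ :=
          mul_le_mul_of_nonneg_left hhalf hcθ.le
      _ ≤ ‖∑ k ∈ Finset.Icc n (2*n), ((Real.sin (k*x₀) : ℝ):ℂ) * (c (k:ℤ) - c (-(k:ℤ)))‖ := hs
      _ ≤ δ + δ / cθ := hVW
  -- combine
  have hEuv : ∑ k ∈ Finset.Icc n (2*n), ‖c (k:ℤ)‖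
      ≤ ((∑ k ∈ Finset.Icc n (2*n), ‖c (k:ℤ) + c (-(k:ℤ))‖)
        + (∑ k ∈ Finset.Icc n (2*n), ‖c (k:ℤ) - c (-(k:ℤ))‖)) / 2 := by
    rw [← Finset.sum_add_distrib, Finset.sum_div]
    apply Finset.sum_le_sum
    intro k hk
    have h := norm_add_le (c (k:ℤ) + c (-(k:ℤ))) (c (k:ℤ) - c (-(k:ℤ)))
    have h2 : (c (k:ℤ) + c (-(k:ℤ))) + (c (k:ℤ) - c (-(k:ℤ))) = 2 * c (k:ℤ) := by ring
    rw [h2, norm_mul, Complex.norm_two] at h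
    linarith
  have hSu0 : 0 ≤ ∑ k ∈ Finset.Icc n (2*n), ‖c (k:ℤ) + c (-(k:ℤ))‖ :=
    Finset.sum_nonneg (fun k _ => norm_nonneg _)
  have hSv0 : 0 ≤ ∑ k ∈ Finset.Icc n (2*n), ‖c (k:ℤ) - c (-(k:ℤ))‖ :=
    Finset.sum_nonneg (fun k _ => norm_nonneg _)
  have hE0 : 0 ≤ ∑ k ∈ Finset.Icc n (2*n), ‖c (k:ℤ)‖ :=
    Finset.sum_nonneg (fun k _ => norm_nonneg _)
  set Su := ∑ k ∈ Finset.Icc n (2*n), ‖c (k:ℤ) + c (-(k:ℤ))‖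
  set Sv := ∑ k ∈ Finset.Icc n (2*n), ‖c (k:ℤ) - c (-(k:ℤ))‖
  set E := ∑ k ∈ Finset.Icc n (2*n), ‖c (k:ℤ)‖
  -- cθ * Su ≤ δ,  cθ * (Sv/2) ≤ δ + δ/cθ,  E ≤ (Su+Sv)/2,  δ = ε cθ²/3
  have hc2 : cθ * (δ / cθ) = δ := by field_simp
  have hV2 : cθ^2 * Sv ≤ 2 * (cθ * δ) + 2*δ := by nlinarith [mul_le_mul_of_nonneg_left hV hcθ.le]
  have hcd : cθ * δ ≤ δ := by nlinarith
  have h1 : cθ^2 * Sv ≤ 4*δ := by nlinarith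
  have h2 : cθ^2 * Su ≤ δ := by nlinarith
  have h3 : cθ^2 * E ≤ cθ^2 * ((Su + Sv)/2) := by nlinarith [sq_nonneg cθ]
  have h4'' : cθ^2 * E ≤ (5/2) * δ := by nlinarith
  have h5 : cθ^2 * E ≤ (5/6) * (ε * cθ^2) := by rw [hδdef] at h4''; nlinarith
  nlinarith

lemma chunk_sum (h : ℕ → ℝ) (a N : ℕ) : ∀ q : ℕ,
    ∑ i ∈ Finset.range q, ∑ k ∈ Finset.Ico (a + i*N) (a + (i+1)*N), h k
      = ∑ k ∈ Finset.Ico a (a + q*N), h k := by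
  intro q
  induction q with
  | zero => simp
  | succ q ih =>
      rw [Finset.sum_range_succ, ih, Finset.sum_Ico_consecutive]
      · exact Nat.le_add_right _ _
      · have : a + (q+1)*N = a + q*N + N := by ring
        omega

/-- Lemma 2 of the paper: under the sector condition (4) and condition (2*),
uniform convergence of the symmetric partial sums implies `n·cₙ → 0`. -/
theorem lemma2 (c : ℤ → ℂ) (θ₀ : ℝ) (hθ₀ : 0 ≤ θ₀) (hθ₁ : θ₀ < Real.pi / 2)
    (h4 : ∀ n : ℤ, 1 ≤ n →
      |(c n + c (-n)).arg| ≤ θ₀ ∧ |(c n - c (-n)).arg| ≤ θ₀)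
    (h2star : ∃ N₀ : ℕ, ∃ hN₀ : 0 < N₀, ∃ M : ℝ, 0 < M ∧ ∀ m : ℕ, 1 ≤ m →
      ∑ n ∈ Finset.Icc m (2 * m), ‖c (n : ℤ) - c ((n : ℤ) + 1)‖ ≤
        M * (Finset.Ico m (m + N₀)).sup' (Finset.nonempty_Ico.mpr (by omega))
          (fun n => ‖c (n : ℤ)‖))
    (f : ℝ → ℂ)
    (hconv : TendstoUniformly
      (fun (n : ℕ) (x : ℝ) =>
        ∑ k ∈ Finset.Icc (-(n : ℤ)) (n : ℤ), c k * Complex.exp ((k : ℂ) * (x : ℂ) * Complex.I))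
      f atTop) :
    Tendsto (fun n : ℕ => (n : ℂ) * c (n : ℤ)) atTop (nhds 0) := by
  obtain ⟨N₀, hN₀, M, hM, h2⟩ := h2star
  have hE := stepA c θ₀ hθ₀ hθ₁ h4 f hconv
  rw [Metric.tendsto_atTop]
  intro ε₀ hε₀
  have hεpos : 0 < ε₀ / (12 * N₀ * (1+M)) := by positivity
  set ε := ε₀ / (12 * N₀ * (1+M)) with hεdef
  obtain ⟨N₁, hN₁⟩ := hE ε hεpos
  refine ⟨2 * (N₁ + 2*N₀ + 2), ?_⟩
  intro j hj
  set n := j / 2 with hndef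
  have hjn : 2*n ≤ j ∧ j ≤ 2*n + 1 := by omega
  have hnN₁ : N₁ ≤ n := by omega
  have hnN₀ : 2*N₀ ≤ n := by omega
  have hn1 : 1 ≤ n := by omega
  set q := n / N₀ with hqdef
  have hq1 : 1 ≤ q := by
    rw [hqdef]
    exact (Nat.one_le_div_iff hN₀).mpr (by omega)
  have hqN : q * N₀ ≤ n := by
    rw [hqdef]; exact Nat.div_mul_le_self n N₀
  have hn2q : n ≤ 2 * (q * N₀) := by
    have h1 : N₀ * q + n % N₀ = n := by rw [hqdef]; exact Nat.div_add_mod n N₀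
    have h2 := Nat.mod_lt n hN₀
    have h3 : N₀ ≤ q * N₀ := Nat.le_mul_of_pos_left N₀ hq1
    have h4 : N₀ * q = q * N₀ := Nat.mul_comm _ _
    omega
  -- the windows maxima
  set A : ℕ → ℝ := fun m => (Finset.Ico m (m + N₀)).sup'
      (Finset.nonempty_Ico.mpr (by omega)) (fun k => ‖c (k:ℤ)‖) with hAdef
  have hA_le_sum : ∀ m : ℕ, A m ≤ ∑ k ∈ Finset.Ico m (m + N₀), ‖c (k:ℤ)‖ := by
    intro m
    apply Finset.sup'_le
    intro b hb
    exact Finset.single_le_sum (f := fun k : ℕ => ‖c (k:ℤ)‖)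
      (fun k _ => norm_nonneg _) hb
  have hchunks : ∑ i ∈ Finset.range q, A (n+1 + i*N₀) ≤ ε := by
    have h1 : ∑ i ∈ Finset.range q, A (n+1 + i*N₀)
        ≤ ∑ i ∈ Finset.range q, ∑ k ∈ Finset.Ico (n+1 + i*N₀) (n+1 + (i+1)*N₀), ‖c (k:ℤ)‖ := by
      apply Finset.sum_le_sum
      intro i _
      have h : n+1 + (i+1)*N₀ = (n+1+i*N₀) + N₀ := by ring
      rw [h]
      exact hA_le_sum _
    have h2' := chunk_sum (fun k => ‖c (k:ℤ)‖) (n+1) N₀ q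
    have h3 : ∑ k ∈ Finset.Ico (n+1) (n+1 + q*N₀), ‖c (k:ℤ)‖
        ≤ ∑ k ∈ Finset.Icc n (2*n), ‖c (k:ℤ)‖ := by
      apply Finset.sum_le_sum_of_subset_of_nonneg
      · intro k hk
        simp only [Finset.mem_Ico, Finset.mem_Icc] at *
        omega
      · intro k _ _
        exact norm_nonneg _
    calc ∑ i ∈ Finset.range q, A (n+1 + i*N₀)
        ≤ ∑ i ∈ Finset.range q, ∑ k ∈ Finset.Ico (n+1 + i*N₀) (n+1 + (i+1)*N₀), ‖c (k:ℤ)‖ := h1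
      _ = ∑ k ∈ Finset.Ico (n+1) (n+1 + q*N₀), ‖c (k:ℤ)‖ := h2'
      _ ≤ ∑ k ∈ Finset.Icc n (2*n), ‖c (k:ℤ)‖ := h3
      _ ≤ ε := hN₁ n hnN₁
  -- pigeonhole
  have hpigeon : ∃ i ∈ Finset.range q, A (n+1 + i*N₀) ≤ ε / q := by
    apply Finset.exists_le_of_sum_le (Finset.nonempty_range_iff.mpr (by omega))
    calc ∑ i ∈ Finset.range q, A (n+1 + i*N₀) ≤ ε := hchunks
      _ = ∑ _i ∈ Finset.range q, ε / q := by
          rw [Finset.sum_const, Finset.card_range, nsmul_eq_mul]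
          field_simp
  obtain ⟨i, hiq, hAi⟩ := hpigeon
  simp only [Finset.mem_range] at hiq
  set m := n + 1 + i*N₀ with hmdef
  have hm1 : 1 ≤ m := by omega
  have hm_le : m + N₀ ≤ 2*n + 1 := by
    have h1 : (i+1) * N₀ ≤ q * N₀ := Nat.mul_le_mul_right _ (by omega)
    have h5 : m + N₀ = n + 1 + (i+1)*N₀ := by rw [hmdef]; ring
    have h6 : (i+1)*N₀ = i*N₀ + N₀ := by ring
    omega
  have hmj : m ≤ j := by omega
  have hj2m : j ≤ 2*m := by omega
  -- variation bound
  have hVar := h2 m hm1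
  have hcm : ‖c (m:ℤ)‖ ≤ A m := by
    apply Finset.le_sup' (fun k : ℕ => ‖c (k:ℤ)‖)
    simp only [Finset.mem_Ico]
    omega
  have hAm : A m ≤ ε / q := hAi
  -- telescope
  have htel : ‖c (j:ℤ)‖ ≤ ‖c (m:ℤ)‖
      + ∑ k ∈ Finset.Icc m (2*m), ‖c (k:ℤ) - c ((k:ℤ)+1)‖ := by
    have hd := dist_le_Ico_sum_dist (fun k : ℕ => c (k:ℤ)) hmj
    have h1 : ‖c (j:ℤ)‖ ≤ ‖c (m:ℤ)‖ + dist (c (m:ℤ)) (c (j:ℤ)) := by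
      rw [Complex.dist_eq]
      have h := norm_add_le (c (m:ℤ) - c (j:ℤ)) (c (j:ℤ))
      rw [sub_add_cancel] at h
      have h' := norm_sub_le (c (j:ℤ)) (c (m:ℤ))
      calc ‖c (j:ℤ)‖ = ‖(c (m:ℤ)) + (c (j:ℤ) - c (m:ℤ))‖ := by ring_nf
        _ ≤ ‖c (m:ℤ)‖ + ‖c (j:ℤ) - c (m:ℤ)‖ := norm_add_le _ _
        _ = ‖c (m:ℤ)‖ + ‖c (m:ℤ) - c (j:ℤ)‖ := by rw [norm_sub_rev]
    have h2' : ∑ k ∈ Finset.Ico m j, dist (c (k:ℤ)) (c ((k:ℤ)+1))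
        ≤ ∑ k ∈ Finset.Icc m (2*m), ‖c (k:ℤ) - c ((k:ℤ)+1)‖ := by
      have hsub : Finset.Ico m j ⊆ Finset.Icc m (2*m) := by
        intro k hk
        simp only [Finset.mem_Ico, Finset.mem_Icc] at *
        omega
      calc ∑ k ∈ Finset.Ico m j, dist (c (k:ℤ)) (c ((k:ℤ)+1))
          = ∑ k ∈ Finset.Ico m j, ‖c (k:ℤ) - c ((k:ℤ)+1)‖ := by
            apply Finset.sum_congr rfl
            intro k _
            rw [Complex.dist_eq]
        _ ≤ ∑ k ∈ Finset.Icc m (2*m), ‖c (k:ℤ) - c ((k:ℤ)+1)‖ := by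
            apply Finset.sum_le_sum_of_subset_of_nonneg hsub
            intro k _ _
            exact norm_nonneg _
    have h3 : ∑ k ∈ Finset.Ico m j, dist ((fun k : ℕ => c (k:ℤ)) k) ((fun k : ℕ => c (k:ℤ)) (k+1))
        = ∑ k ∈ Finset.Ico m j, dist (c (k:ℤ)) (c ((k:ℤ)+1)) := by
      apply Finset.sum_congr rfl
      intro k _
      simp only
      norm_cast
    rw [h3] at hd
    linarith
  have hcj : ‖c (j:ℤ)‖ ≤ (1 + M) * (ε / q) := by
    have hεq : 0 ≤ ε / q := by positivity
    calc ‖c (j:ℤ)‖ ≤ ‖c (m:ℤ)‖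
          + ∑ k ∈ Finset.Icc m (2*m), ‖c (k:ℤ) - c ((k:ℤ)+1)‖ := htel
      _ ≤ A m + M * A m := by
          have := hVar
          linarith
      _ = (1 + M) * A m := by ring
      _ ≤ (1 + M) * (ε / q) := by
          apply mul_le_mul_of_nonneg_left hAm (by linarith)
  -- conclude
  have hdist : dist ((j:ℂ) * c (j:ℤ)) 0 = (j:ℝ) * ‖c (j:ℤ)‖ := by
    rw [dist_zero_right, norm_mul, Complex.norm_natCast]
  rw [hdist]
  have hj6 : j ≤ 6 * (q * N₀) := by omega
  have hq0 : (0:ℝ) < q := by exact_mod_cast hq1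
  have hN₀0 : (0:ℝ) < N₀ := by exact_mod_cast hN₀
  calc (j:ℝ) * ‖c (j:ℤ)‖ ≤ (j:ℝ) * ((1 + M) * (ε / q)) := by
        apply mul_le_mul_of_nonneg_left hcj (by positivity)
    _ ≤ (6 * ((q:ℝ) * N₀)) * ((1 + M) * (ε / q)) := by
        apply mul_le_mul_of_nonneg_right _ (by positivity)
        exact_mod_cast hj6
    _ = 6 * N₀ * (1 + M) * ε := by
        field_simp
    _ = ε₀ / 2 := by
        rw [hεdef]
        field_simp
        ring
    _ < ε₀ := by linarith
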